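/- Let l be a nonnegative integer, m ∈ ℤ, and q ∈ ℤ. Define ₁F₁(a; b; z) = Σ_{n=0}^∞ ((a)_n / (b)_n) zⁿ/n! and Ψ_{m,l}(θ,y) = e^{−i m θ/2} e^{−y²/2} y^l · ₁F₁( (1 + 2l − m)/4 ; l + 1/2 ; y² ). Then the following are equivalent: (i) for every j ∈ ℤ and all (θ,y) ∈ ℝ²: Ψ_{m,l}(θ + jπ, (−1)^j y) = i^{−j q} · Ψ_{m,l}(θ, y); (ii) m ≡ 2l + q (mod 4). -/
import Mathlib


open Complex

/-- The confluent hypergeometric function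
`₁F₁(a;b;z) = Σ_{n≥0} ((a)_n/(b)_n) zⁿ/n!` (Pochhammer rising factorials). -/
noncomputable def oneFone (a b z : ℂ) : ℂ :=
  ∑' n : ℕ, ((ascPochhammer ℂ n).eval a / (ascPochhammer ℂ n).eval b) * z ^ n
    / (n.factorial : ℂ)

/-- The weight-`m` `K`-finite vector
`Ψ_{m,l}(θ,y) = e^{-imθ/2} e^{-y²/2} y^l ₁F₁((1+2l-m)/4; l+1/2; y²)`. -/
noncomputable def Psi (m : ℤ) (l : ℕ) (θ y : ℝ) : ℂ :=
  Complex.exp (-I * (m : ℂ) * (θ : ℂ) / 2) * Complex.exp (-(y : ℂ) ^ 2 / 2)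
    * (y : ℂ) ^ l
    * oneFone ((1 + 2 * (l : ℂ) - (m : ℂ)) / 4) ((l : ℂ) + 1/2) ((y : ℂ) ^ 2)

/-- The `n`-th Taylor coefficient of `₁F₁(a;b;·)`. -/
noncomputable def oneFoneCoeff (a b : ℂ) (n : ℕ) : ℂ :=
  (ascPochhammer ℂ n).eval a / (ascPochhammer ℂ n).eval b / (n.factorial : ℂ)

lemma oneFoneCoeff_succ (a b : ℂ) (n : ℕ) :
    oneFoneCoeff a b (n + 1) = oneFoneCoeff a b n * ((a + n) / ((b + n) * (n + 1))) := by
  unfold oneFoneCoeff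
  rw [ascPochhammer_succ_right, Nat.factorial_succ]
  push_cast
  simp only [Polynomial.eval_mul, Polynomial.eval_add, Polynomial.eval_X,
    Polynomial.eval_natCast]
  rw [div_div, div_div, div_mul_div_comm]
  congr 1
  ring

lemma I_zpow_eq_one_iff (n : ℤ) : I ^ n = 1 ↔ (4:ℤ) ∣ n := by
  have h4 : I ^ (4:ℤ) = 1 := by
    rw [show (4:ℤ) = ((4:ℕ):ℤ) by norm_num, zpow_natCast]
    simp [pow_succ, Complex.I_mul_I]
  constructor
  · intro h
    have hmod : I ^ (n % 4) = 1 := by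
      have : I ^ n = I ^ (4 * (n / 4)) * I ^ (n % 4) := by
        rw [← zpow_add₀ Complex.I_ne_zero]
        congr 1
        omega
      rw [this, zpow_mul, h4, one_zpow, one_mul] at h
      exact h
    have hr : n % 4 = 0 ∨ n % 4 = 1 ∨ n % 4 = 2 ∨ n % 4 = 3 := by omega
    rcases hr with hr | hr | hr | hr
    · omega
    · rw [hr, zpow_one] at hmod
      exact absurd hmod (by
        intro hI
        have := Complex.I_sq
        rw [hI] at this
        norm_num at this)
    · rw [hr, show (2:ℤ) = ((2:ℕ):ℤ) by norm_num, zpow_natCast, Complex.I_sq] at hmod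
      norm_num at hmod
    · rw [hr, show (3:ℤ) = ((3:ℕ):ℤ) by norm_num, zpow_natCast] at hmod
      have h3 : I ^ 3 = -I := by simp [pow_succ, Complex.I_mul_I]
      rw [h3] at hmod
      have hI : I = -1 := by linear_combination -hmod
      rw [Complex.ext_iff] at hI
      norm_num at hI
  · rintro ⟨k, rfl⟩
    rw [zpow_mul, h4, one_zpow]

lemma summable_oneFoneCoeff (a : ℂ) (l : ℕ) (z : ℂ) :
    Summable (fun n => ‖oneFoneCoeff a ((l:ℂ) + 1/2) n * z ^ n‖) := by
  set b : ℂ := (l:ℂ) + 1/2 with hb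
  obtain ⟨N, hN⟩ := exists_nat_ge (max ‖a‖ (4 * ‖z‖))
  apply summable_of_ratio_norm_eventually_le (r := 1/2) (by norm_num)
  filter_upwards [Filter.eventually_ge_atTop (max N 1)] with n hn
  have hn1 : (1:ℕ) ≤ n := le_of_max_le_right hn
  have hnN : N ≤ n := le_of_max_le_left hn
  have hna : ‖a‖ ≤ (n:ℝ) := le_trans (le_trans (le_max_left _ _) hN) (by exact_mod_cast hnN)
  have hnz : 4 * ‖z‖ ≤ (n:ℝ) := le_trans (le_trans (le_max_right _ _) hN) (by exact_mod_cast hnN)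
  have hnpos : (0:ℝ) < n := by exact_mod_cast hn1
  rw [norm_norm, norm_norm, oneFoneCoeff_succ, pow_succ]
  have hre : oneFoneCoeff a b n * ((a + n) / ((b + n) * (n + 1))) * (z ^ n * z)
      = oneFoneCoeff a b n * z ^ n * ((a + n) / ((b + n) * (n + 1)) * z) := by ring
  rw [hre, norm_mul]
  have hmult : ‖(a + n) / ((b + n) * (n + 1)) * z‖ ≤ 1/2 := by
    rw [norm_mul, norm_div, norm_mul]
    have hbn : ‖b + (n:ℂ)‖ = (l:ℝ) + 1/2 + n := by
      have : b + (n:ℂ) = (((l:ℝ) + 1/2 + n : ℝ) : ℂ) := by rw [hb]; push_cast; ring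
      rw [this, Complex.norm_real, Real.norm_of_nonneg (by positivity)]
    have hn1c : ‖((n:ℂ) + 1)‖ = (n:ℝ) + 1 := by
      have : (n:ℂ) + 1 = (((n:ℝ) + 1 : ℝ) : ℂ) := by push_cast; ring
      rw [this, Complex.norm_real, Real.norm_of_nonneg (by positivity)]
    rw [hbn, hn1c]
    have han : ‖a + (n:ℂ)‖ ≤ 2 * n := by
      calc ‖a + (n:ℂ)‖ ≤ ‖a‖ + ‖(n:ℂ)‖ := norm_add_le _ _
        _ ≤ (n:ℝ) + n := by
            have : ‖(n:ℂ)‖ = (n:ℝ) := by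
              rw [show ((n:ℂ)) = (((n:ℝ)):ℂ) by push_cast; ring, Complex.norm_real,
                Real.norm_of_nonneg (by positivity)]
            rw [this]; linarith
        _ = 2 * n := by ring
    have hden : (0:ℝ) < ((l:ℝ) + 1/2 + n) * ((n:ℝ) + 1) := by positivity
    rw [div_mul_eq_mul_div, div_le_iff₀ hden]
    have h1 : ‖a + (n:ℂ)‖ * ‖z‖ ≤ 2 * n * ‖z‖ :=
      mul_le_mul_of_nonneg_right han (norm_nonneg z)
    nlinarith [norm_nonneg z, Nat.cast_nonneg (α := ℝ) l]
  calc ‖oneFoneCoeff a b n * z ^ n‖ * ‖(a + n) / ((b + n) * (n + 1)) * z‖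
      ≤ ‖oneFoneCoeff a b n * z ^ n‖ * (1/2) :=
        mul_le_mul_of_nonneg_left hmult (norm_nonneg _)
    _ = 1/2 * ‖oneFoneCoeff a b n * z ^ n‖ := by ring

lemma oneFone_eq (a b z : ℂ) : oneFone a b z = ∑' n : ℕ, oneFoneCoeff a b n * z ^ n := by
  unfold oneFone oneFoneCoeff
  congr 1; funext n; ring

set_option maxHeartbeats 1000000 in
lemma exists_oneFone_ne_zero (a : ℂ) (l : ℕ) :
    ∃ y : ℝ, 0 < y ∧ oneFone a ((l:ℂ) + 1/2) ((y:ℂ)^2) ≠ 0 := by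
  set b : ℂ := (l:ℂ) + 1/2 with hb
  set S : ℝ := ∑' n : ℕ, ‖oneFoneCoeff a b (n + 1)‖ with hS
  have hS1 : Summable (fun n : ℕ => ‖oneFoneCoeff a b n‖) := by
    rw [hb]; simpa using summable_oneFoneCoeff a l 1
  have hStail : Summable (fun n : ℕ => ‖oneFoneCoeff a b (n + 1)‖) :=
    (summable_nat_add_iff 1).2 hS1
  have hSnonneg : 0 ≤ S := tsum_nonneg (fun n => norm_nonneg _)
  set ε : ℝ := min 1 (1 / (2 * (S + 1))) with hε
  have hSpos : (0:ℝ) < 2 * (S + 1) := by linarith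
  have hεpos : 0 < ε := lt_min one_pos (by exact div_pos one_pos hSpos)
  have hεle1 : ε ≤ 1 := min_le_left _ _
  have hεleS : ε * S < 1 := by
    have h2 : ε ≤ 1 / (2 * (S + 1)) := min_le_right _ _
    have : ε * S ≤ (1 / (2 * (S + 1))) * S :=
      mul_le_mul_of_nonneg_right h2 hSnonneg
    have hlt : (1 / (2 * (S + 1))) * S < 1 := by
      rw [div_mul_eq_mul_div, div_lt_one hSpos]
      nlinarith
    linarith
  refine ⟨Real.sqrt ε, Real.sqrt_pos.2 hεpos, ?_⟩
  set z : ℂ := ((Real.sqrt ε : ℝ) : ℂ) ^ 2 with hz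
  have hznorm : ‖z‖ = ε := by
    rw [hz, norm_pow, Complex.norm_real, Real.norm_of_nonneg (Real.sqrt_nonneg _),
      Real.sq_sqrt hεpos.le]
  have hsum : Summable (fun n : ℕ => oneFoneCoeff a b n * z ^ n) := by
    rw [hb]; exact (summable_oneFoneCoeff a l z).of_norm
  rw [oneFone_eq]
  rw [Summable.tsum_eq_zero_add hsum]
  have hc0 : oneFoneCoeff a b 0 * z ^ 0 = 1 := by
    unfold oneFoneCoeff
    simp [ascPochhammer_zero]
  rw [hc0]
  have htail_sum : Summable (fun n : ℕ => ‖oneFoneCoeff a b (n + 1) * z ^ (n + 1)‖) := by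
    rw [hb]
    exact (summable_nat_add_iff 1).2 (summable_oneFoneCoeff a l z)
  have hbound : ‖∑' n : ℕ, oneFoneCoeff a b (n + 1) * z ^ (n + 1)‖ < 1 := by
    have h1 : ‖∑' n : ℕ, oneFoneCoeff a b (n + 1) * z ^ (n + 1)‖
        ≤ ∑' n : ℕ, ‖oneFoneCoeff a b (n + 1) * z ^ (n + 1)‖ :=
      norm_tsum_le_tsum_norm htail_sum
    have h2 : ∀ n : ℕ, ‖oneFoneCoeff a b (n + 1) * z ^ (n + 1)‖
        ≤ ‖oneFoneCoeff a b (n + 1)‖ * ε := by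
      intro n
      rw [norm_mul, norm_pow, hznorm]
      exact mul_le_mul_of_nonneg_left
        (pow_le_of_le_one hεpos.le hεle1 (Nat.succ_ne_zero n)) (norm_nonneg _)
    have h3 : ∑' n : ℕ, ‖oneFoneCoeff a b (n + 1) * z ^ (n + 1)‖
        ≤ ∑' n : ℕ, ‖oneFoneCoeff a b (n + 1)‖ * ε :=
      Summable.tsum_le_tsum h2 htail_sum (hStail.mul_right ε)
    have h4 : ∑' n : ℕ, ‖oneFoneCoeff a b (n + 1)‖ * ε = S * ε := tsum_mul_right
    calc ‖∑' n : ℕ, oneFoneCoeff a b (n + 1) * z ^ (n + 1)‖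
        ≤ ∑' n : ℕ, ‖oneFoneCoeff a b (n + 1) * z ^ (n + 1)‖ := h1
      _ ≤ ∑' n : ℕ, ‖oneFoneCoeff a b (n + 1)‖ * ε := h3
      _ = S * ε := h4
      _ = ε * S := by ring
      _ < 1 := hεleS
  intro hcontra
  have : ∑' n : ℕ, oneFoneCoeff a b (n + 1) * z ^ (n + 1) = -1 := by linear_combination hcontra
  rw [this] at hbound
  norm_num at hbound

lemma exp_neg_pi_I_half : Complex.exp (-(↑Real.pi * I) / 2) = -I := by
  have : (-(↑Real.pi * I) / 2 : ℂ) = ((-(Real.pi/2) : ℝ) : ℂ) * I := by push_cast; ring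
  rw [this, Complex.exp_mul_I, ← Complex.ofReal_cos, ← Complex.ofReal_sin]
  rw [Real.cos_neg, Real.sin_neg, Real.cos_pi_div_two, Real.sin_pi_div_two]
  simp

lemma Psi_shift (m : ℤ) (l : ℕ) (j : ℤ) (θ y : ℝ) :
    Psi m l (θ + j * Real.pi) ((-1 : ℝ) ^ j * y)
      = I ^ (j * (2 * (l:ℤ) - m)) * Psi m l θ y := by
  have hIne := Complex.I_ne_zero
  have hneg : (-1 : ℂ) = I ^ (2:ℤ) := by
    rw [show (2:ℤ) = ((2:ℕ):ℤ) by norm_num, zpow_natCast, Complex.I_sq]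
  have hc : (((-1:ℝ) ^ j * y : ℝ) : ℂ) = I ^ (2*j) * (y:ℂ) := by
    push_cast
    rw [hneg, ← zpow_mul]
  have hsq : (I ^ (2*j) * (y:ℂ)) ^ 2 = (y:ℂ) ^ 2 := by
    rw [mul_pow, ← zpow_natCast (I ^ (2*j)), ← zpow_mul]
    norm_num
    rw [show (2*j*2 : ℤ) = 4 * j by ring, zpow_mul,
      show (4:ℤ) = ((4:ℕ):ℤ) by norm_num, zpow_natCast]
    simp [pow_succ, Complex.I_mul_I]
  have hpowl : (I ^ (2*j) * (y:ℂ)) ^ l = I ^ (2*j*l) * (y:ℂ) ^ l := by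
    rw [mul_pow, ← zpow_natCast (I ^ (2*j)), ← zpow_mul]
  have hexp : Complex.exp (-I * (m:ℂ) * ((θ + j * Real.pi : ℝ) : ℂ) / 2)
      = Complex.exp (-I * (m:ℂ) * (θ:ℂ) / 2) * I ^ (-(m*j)) := by
    have harg : (-I * (m:ℂ) * ((θ + j * Real.pi : ℝ) : ℂ) / 2)
        = -I * (m:ℂ) * (θ:ℂ) / 2 + ((m*j : ℤ) : ℂ) * (-(↑Real.pi * I) / 2) := by
      push_cast; ring
    rw [harg, Complex.exp_add, Complex.exp_int_mul, exp_neg_pi_I_half]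
    congr 1
    rw [show (-I : ℂ) = I⁻¹ by
      rw [inv_eq_of_mul_eq_one_right]; rw [mul_comm]; simp]
    rw [inv_zpow, ← zpow_neg]
  unfold Psi
  rw [hc, hsq, hpowl, hexp]
  rw [show I ^ (j * (2 * (l:ℤ) - m)) = I ^ (-(m*j)) * I ^ (2*j*(l:ℤ)) by
    rw [← zpow_add₀ hIne]; congr 1; ring]
  ring

lemma exists_Psi_ne_zero (m : ℤ) (l : ℕ) : ∃ y : ℝ, Psi m l 0 y ≠ 0 := by
  obtain ⟨y, hy, hF⟩ := exists_oneFone_ne_zero ((1 + 2 * (l : ℂ) - (m : ℂ)) / 4) l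
  refine ⟨y, ?_⟩
  unfold Psi
  apply mul_ne_zero
  apply mul_ne_zero
  apply mul_ne_zero
  · exact Complex.exp_ne_zero _
  · exact Complex.exp_ne_zero _
  · exact pow_ne_zero _ (by exact_mod_cast hy.ne')
  · exact hF

/-- `Ψ_{m,l}` satisfies the defining parity condition
`Ψ(θ + jπ, (-1)^j y) = i^{-jq} Ψ(θ,y)` of the compact picture `I''(q,r,s)`
if and only if `m ≡ 2l + q (mod 4)`. -/
theorem parity_condition_iff (l : ℕ) (m q : ℤ) :
    (∀ (j : ℤ) (θ y : ℝ),
        Psi m l (θ + j * Real.pi) ((-1 : ℝ) ^ j * y)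
          = I ^ (-(j * q)) * Psi m l θ y) ↔
      m ≡ 2 * (l : ℤ) + q [ZMOD 4] := by
  constructor
  · intro h
    obtain ⟨y, hy⟩ := exists_Psi_ne_zero m l
    have h1 := h 1 0 y
    rw [Psi_shift] at h1
    have hcancel : I ^ ((1:ℤ) * (2 * (l:ℤ) - m)) = I ^ (-((1:ℤ) * q)) :=
      mul_right_cancel₀ hy h1
    have hone : I ^ ((1:ℤ) * (2 * (l:ℤ) - m) - (-((1:ℤ) * q))) = 1 := by
      rw [zpow_sub₀ Complex.I_ne_zero, hcancel, div_self (zpow_ne_zero _ Complex.I_ne_zero)]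
    have hdvd : (4:ℤ) ∣ ((1:ℤ) * (2 * (l:ℤ) - m) - (-((1:ℤ) * q))) :=
      (I_zpow_eq_one_iff _).1 hone
    simp only [Int.ModEq]
    omega
  · intro hmod j θ y
    rw [Psi_shift]
    congr 1
    have hdvd : (4:ℤ) ∣ (j * (2 * (l:ℤ) - m) - (-(j * q))) := by
      simp only [Int.ModEq] at hmod
      have h4 : (4:ℤ) ∣ (2 * (l:ℤ) - m + q) := by omega
      obtain ⟨k, hk⟩ := h4
      exact ⟨j * k, by linear_combination j * hk⟩
    have hone : I ^ (j * (2 * (l:ℤ) - m) - (-(j * q))) = 1 :=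
      (I_zpow_eq_one_iff _).2 hdvd
    calc I ^ (j * (2 * (l:ℤ) - m))
        = I ^ (j * (2 * (l:ℤ) - m) - (-(j * q))) * I ^ (-(j * q)) := by
          rw [← zpow_add₀ Complex.I_ne_zero]; congr 1; ring
      _ = I ^ (-(j * q)) := by rw [hone, one_mul]
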